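/- The smallest nonzero eigenvalue (spectral gap) of the combinatorial Laplacian Δ_{k−1} of the clique complex of K(m,k) is m; in fact its spectrum (ignoring multiplicity) is contained in {0, m, 2m, ..., km}. -/

import Mathlib

open Finsupp

attribute [local instance] Classical.propDecidable

variable (F : Type*) [Field F]
variable {V : Type*} [Fintype V] [LinearOrder V]

/-- The space of `F`-chains on the faces of cardinality `c` of the abstract simplicial
complex `K` (a face of cardinality `c` is a simplex of dimension `c − 1`; cardinality `0`
gives the `(−1)`-dimensional simplex `∅` of the reduced chain complex). -/
abbrev Cc (K : Finset V → Prop) (c : ℕ) : Type _ :=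
  {s : Finset V // s.card = c ∧ K s} →₀ F

/-- The boundary map `∂ : C_c → C_{c-1}` (in cardinality indexing) of the reduced chain
complex of `K`: a face maps to the alternating sum of its codimension-one subfaces, with
sign given by the position (in the ordering of `V`) of the removed vertex. -/
noncomputable def downC (K : Finset V → Prop) (c : ℕ) :
    Cc F K (c + 1) →ₗ[F] Cc F K c :=
  Finsupp.lsum F fun s => LinearMap.toSpanSingleton F _
    (∑ a ∈ s.1.attach,
      if h : K (s.1.erase a.1) then
        ((-1 : F) ^ ((s.1.filter fun b => b < a.1).card)) •
          Finsupp.single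
            (⟨s.1.erase a.1, by rw [Finset.card_erase_of_mem a.2, s.2.1]; omega, h⟩ :
              {s : Finset V // s.card = c ∧ K s}) 1
      else 0)

/-- The coboundary map `∂† : C_c → C_{c+1}`, the adjoint of `downC` with respect to the
inner product making the faces an orthonormal basis: a face maps to the signed sum of the
faces of `K` obtained by inserting one vertex. -/
noncomputable def upC (K : Finset V → Prop) (c : ℕ) :
    Cc F K c →ₗ[F] Cc F K (c + 1) :=
  Finsupp.lsum F fun t => LinearMap.toSpanSingleton F _
    (∑ a : V,
      if h : a ∉ t.1 ∧ K (insert a t.1) then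
        ((-1 : F) ^ ((t.1.filter fun b => b < a).card)) •
          Finsupp.single
            (⟨insert a t.1, by rw [Finset.card_insert_of_notMem h.1, t.2.1], h.2⟩ :
              {s : Finset V // s.card = c + 1 ∧ K s}) 1
      else 0)

/-- The combinatorial Laplacian `Δ = ∂†∂ + ∂∂†` of the reduced chain complex of `K`,
acting on chains of faces of cardinality `c` (i.e. simplices of dimension `c − 1`). -/
noncomputable def lapCard (K : Finset V → Prop) : (c : ℕ) → Cc F K c →ₗ[F] Cc F K c
  | 0 => downC F K 0 ∘ₗ upC F K 0
  | (d + 1) => upC F K d ∘ₗ downC F K d + downC F K (d + 1) ∘ₗ upC F K (d + 1)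

/-- The reduced Betti number `β̃_{c-1}` of `K` (in cardinality indexing: `redBettiC K c`
is the Betti number of dimension `c − 1`): the dimension of the kernel of the boundary map
out of the cardinality-`c` chains minus the rank of the boundary map into them. -/
noncomputable def redBettiC (K : Finset V → Prop) : ℕ → ℕ
  | 0 => Module.finrank F (Cc F K 0) -
      Module.finrank F (LinearMap.range (downC F K 0))
  | (d + 1) => Module.finrank F (LinearMap.ker (downC F K d)) -
      Module.finrank F (LinearMap.range (downC F K (d + 1)))

/-- The complete `k`-partite graph `K(m,k)`: `k` clusters of `m` vertices each (with a
linear order on the vertices), two vertices adjacent iff they lie in different clusters. -/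
def KmkGraph (m k : ℕ) : SimpleGraph (Lex (Fin k × Fin m)) where
  Adj v w := (ofLex v).1 ≠ (ofLex w).1
  symm := ⟨fun v w h => h.symm⟩
  loopless := ⟨fun v h => h rfl⟩

/-! The top faces of the clique complex of `K(m,k)` are the graphs of the maps
`g : Fin k → Fin m`, and there are no larger cliques, so `Δ_{k-1} = ∂∂†`. Removing the vertex of
cluster `i` from a top face and inserting another vertex of cluster `i` produce the same sign, so
`Δ_{k-1} = ∑ᵢ Jᵢ`, where `Jᵢ e_g = ∑ₓ e_{g[i ↦ x]}`. The `Jᵢ` commute and satisfy `Jᵢ² = m Jᵢ`;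
splitting an eigenvector `v` of `S + Jᵢ` as `Jᵢ v` plus the rest shows that every eigenvalue of
`∑ᵢ Jᵢ` is `j m` with `j ≤ k`. The eigenvalue `m` is attained on a tensor product of zero-sum
vectors in all coordinates but one. -/

namespace Module.End

variable {R M : Type*} [CommRing R] [AddCommGroup M] [Module R M]

theorem HasEigenvalue.of_add_of_mul_self_eq_smul {f T : End R M} {c μ : R}
    (hfT : Commute f T) (hT : T * T = c • T) (hμ : HasEigenvalue (f + T) μ) :
    HasEigenvalue f (μ - c) ∨ HasEigenvalue f μ := by
  obtain ⟨v, hv⟩ := hμ.exists_hasEigenvector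
  have hfv : f v + T v = μ • v := hv.apply_eq_smul
  by_cases hTv : T v = 0
  · refine .inr (hasEigenvalue_of_hasEigenvector ⟨mem_eigenspace_iff.mpr ?_, hv.2⟩)
    simpa [hTv] using hfv
  · refine .inl (hasEigenvalue_of_hasEigenvector ⟨mem_eigenspace_iff.mpr ?_, hTv⟩)
    have hTfv : T (f v) + T (T v) = μ • T v := by rw [← map_add, hfv, map_smul]
    have hTTv : T (T v) = c • T v := by rw [← mul_apply, hT, LinearMap.smul_apply]
    have hfTv : T (f v) = f (T v) := by rw [← mul_apply, ← hfT.eq, mul_apply]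
    rw [sub_smul, ← hTfv, hTTv, hfTv, add_sub_cancel_right]

theorem HasEigenvalue.exists_eq_natCast_mul_of_sum [IsDomain R] [IsTorsionFree R M] {ι : Type*}
    [DecidableEq ι] {T : ι → End R M} {c μ : R} (hcomm : ∀ i j, Commute (T i) (T j))
    (hT : ∀ i, T i * T i = c • T i) {s : Finset ι} (hμ : HasEigenvalue (∑ i ∈ s, T i) μ) :
    ∃ j ≤ s.card, μ = j * c := by
  induction s using Finset.induction_on generalizing μ with
  | empty =>
    obtain ⟨v, hv⟩ := hμ.exists_hasEigenvector
    have hμv : μ • v = 0 := by simpa using hv.apply_eq_smul.symm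
    exact ⟨0, le_rfl, by simpa [hv.2] using hμv⟩
  | insert a s ha ih =>
    rw [Finset.sum_insert ha, add_comm] at hμ
    have hcomm_sum : Commute (∑ i ∈ s, T i) (T a) := Commute.sum_left _ _ _ fun i _ => hcomm i a
    rw [Finset.card_insert_of_notMem ha]
    rcases hμ.of_add_of_mul_self_eq_smul hcomm_sum (hT a) with hμ' | hμ'
    · obtain ⟨j, hj, hμj⟩ := ih hμ'
      exact ⟨j + 1, by omega, by push_cast; linear_combination hμj⟩
    · obtain ⟨j, hj, hμj⟩ := ih hμ'
      exact ⟨j, by omega, hμj⟩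

end Module.End

theorem Fintype.sum_sum_update_swap {ι α M : Type*} [DecidableEq ι] [Fintype ι] [Fintype α]
    [AddCommMonoid M] (i : ι) (f : (ι → α) → (ι → α) → M) :
    ∑ g, ∑ x, f (Function.update g i x) g = ∑ g, ∑ x, f g (Function.update g i x) := by
  simp only [← Fintype.sum_prod_type']
  have hinv : Function.Involutive fun p : (ι → α) × α => (Function.update p.1 i p.2, p.1 i) :=
    fun p => by simp
  refine Fintype.sum_bijective _ hinv.bijective _ _ fun p => ?_
  simp

theorem Finset.sum_prod_update_eq_ite {ι α R : Type*} [DecidableEq ι] [Fintype α] [CommSemiring R]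
    {w : α → R} (hw : ∑ x, w x = 0) (s : Finset ι) (g : ι → α) (i : ι) :
    ∑ x, ∏ j ∈ s, w (Function.update g i x j) =
      if i ∈ s then 0 else Fintype.card α • ∏ j ∈ s, w (g j) := by
  simp_rw [← Function.comp_apply (f := w), Function.comp_update]
  split_ifs with hi
  · simp_rw [Finset.prod_update_of_mem hi, ← Finset.sum_mul, hw, zero_mul]
  · simp_rw [Finset.prod_update_of_notMem hi, Finset.sum_const, Finset.card_univ]

section FaceChain

variable {F} {W : Type*} {K : Finset W → Prop}

variable (F K) in
noncomputable def faceChain (c : ℕ) (s : Finset W) : Cc F K c :=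
  if h : s.card = c ∧ K s then Finsupp.single ⟨s, h⟩ 1 else 0

theorem faceChain_of_mem {c : ℕ} (s : {s : Finset W // s.card = c ∧ K s}) :
    faceChain F K c s.1 = Finsupp.single s 1 :=
  dif_pos s.2

theorem faceChain_of_not {c : ℕ} {s : Finset W} (hs : ¬K s) :
    faceChain F K c s = 0 :=
  dif_neg fun h => hs h.2

theorem downC_single [LinearOrder W] {c : ℕ} (s : {s : Finset W // s.card = c + 1 ∧ K s}) :
    downC F K c (Finsupp.single s 1) =
      ∑ a ∈ s.1, (-1 : F) ^ (s.1.filter (· < a)).card • faceChain F K c (s.1.erase a) := by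
  rw [downC, Finsupp.lsum_single, LinearMap.toSpanSingleton_apply, one_smul,
    ← Finset.sum_attach s.1]
  refine Finset.sum_congr rfl fun a _ => ?_
  split_ifs with h
  · rw [faceChain_of_mem ⟨_, by rw [Finset.card_erase_of_mem a.2, s.2.1]; rfl, h⟩]
  · rw [faceChain_of_not h, smul_zero]

theorem upC_single [Fintype W] [LinearOrder W] {c : ℕ} (t : {s : Finset W // s.card = c ∧ K s}) :
    upC F K c (Finsupp.single t 1) =
      ∑ a ∈ t.1ᶜ, (-1 : F) ^ (t.1.filter (· < a)).card • faceChain F K (c + 1) (insert a t.1) := by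
  rw [upC, Finsupp.lsum_single, LinearMap.toSpanSingleton_apply, one_smul,
    ← Finset.univ_inter t.1ᶜ, ← Finset.sum_ite_mem]
  refine Finset.sum_congr rfl fun a _ => ?_
  by_cases ha : a ∈ t.1
  · rw [dif_neg (fun h => h.1 ha), if_neg (Finset.notMem_compl.mpr ha)]
  rw [if_pos (Finset.mem_compl.mpr ha)]
  split_ifs with h
  · rw [faceChain_of_mem ⟨_, by rw [Finset.card_insert_of_notMem ha, t.2.1], h.2⟩]
  · rw [faceChain_of_not fun hK => h ⟨ha, hK⟩, smul_zero]

end FaceChain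

abbrev SimpleGraph.cliqueComplex {W : Type*} (G : SimpleGraph W) : Finset W → Prop :=
  fun s => G.IsClique ↑s

namespace KmkGraph

open Finset Function

-- `upC` and `downC` were elaborated with classical decidability; stating the lemmas below with
-- the same `insert`/`erase`/`filter` instances lets them rewrite inside those definitions.
attribute [local instance 2000] Classical.propDecidable

variable {m k : ℕ}

def coloring (m k : ℕ) : (KmkGraph m k).Coloring (Fin k) :=
  SimpleGraph.Coloring.mk (fun v => (ofLex v).1) fun h => h

noncomputable def graphFace (g : Fin k → Fin m) : Finset (Lex (Fin k × Fin m)) :=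
  univ.image fun i => toLex (i, g i)

theorem toLex_mem_graphFace {g : Fin k → Fin m} {i : Fin k} {x : Fin m} :
    toLex (i, x) ∈ graphFace g ↔ g i = x := by
  simp [graphFace, eq_comm]

theorem card_graphFace (g : Fin k → Fin m) : (graphFace g).card = k := by
  rw [graphFace, card_image_of_injective _ fun i j h => congrArg (·.1) (toLex.injective h),
    card_univ, Fintype.card_fin]

theorem isClique_graphFace (g : Fin k → Fin m) : (KmkGraph m k).IsClique ↑(graphFace g) := by
  simp only [graphFace, coe_image, coe_univ, Set.image_univ]
  rintro _ ⟨i, rfl⟩ _ ⟨j, rfl⟩ hne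
  exact fun hij : i = j => hne (by rw [hij])

theorem graphFace_injective : Injective (graphFace (m := m) (k := k)) := by
  intro g g' h
  funext i
  rw [← toLex_mem_graphFace, h, toLex_mem_graphFace]

theorem exists_graphFace_eq {s : Finset (Lex (Fin k × Fin m))}
    (hs : (KmkGraph m k).IsClique ↑s) (hcard : s.card = k) : ∃ g, graphFace g = s := by
  have hsurj := (coloring m k).surjOn_of_card_le_isClique hs (by simp [hcard])
  choose f hfs hfcol using fun i => hsurj (Set.mem_univ i)
  refine ⟨fun i => (ofLex (f i)).2, eq_of_subset_of_card_le ?_ (by rw [hcard, card_graphFace])⟩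
  simp only [graphFace, image_subset_iff, mem_univ, forall_const]
  intro i
  have hfi : toLex (i, (ofLex (f i)).2) = f i :=
    congrArg toLex (Prod.ext (hfcol i).symm rfl : (i, (ofLex (f i)).2) = ofLex (f i))
  exact hfi ▸ hfs i

noncomputable def topFaceEquiv (m k : ℕ) :
    (Fin k → Fin m) ≃
      {s : Finset (Lex (Fin k × Fin m)) // s.card = k ∧ (KmkGraph m k).cliqueComplex s} :=
  Equiv.ofBijective (fun g => ⟨graphFace g, card_graphFace g, isClique_graphFace g⟩)
    ⟨fun _ _ h => graphFace_injective (congrArg Subtype.val h), fun s =>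
      (exists_graphFace_eq s.2.2 s.2.1).imp fun _ hg => Subtype.ext hg⟩

theorem topFaceEquiv_apply_coe (g : Fin k → Fin m) :
    (topFaceEquiv m k g : Finset (Lex (Fin k × Fin m))) = graphFace g := rfl

theorem insert_erase_graphFace (g : Fin k → Fin m) (i : Fin k) (x : Fin m) :
    insert (toLex (i, x)) ((graphFace g).erase (toLex (i, g i))) = graphFace (update g i x) := by
  ext c
  obtain ⟨⟨j, y⟩, rfl⟩ := toLex.surjective c
  rcases eq_or_ne j i with rfl | hji
  · simp [toLex_mem_graphFace, eq_comm]
  · simp [toLex_mem_graphFace, hji]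

theorem fst_eq_of_isClique_insert_erase_graphFace {g : Fin k → Fin m} {i : Fin k}
    {a : Lex (Fin k × Fin m)} (ha : a ∉ (graphFace g).erase (toLex (i, g i)))
    (hK : (KmkGraph m k).IsClique ↑(insert a ((graphFace g).erase (toLex (i, g i))))) :
    (ofLex a).1 = i := by
  obtain ⟨⟨j, y⟩, rfl⟩ := toLex.surjective a
  by_contra hji
  change j ≠ i at hji
  have hmem : toLex (j, g j) ∈ (graphFace g).erase (toLex (i, g i)) := by
    simp [toLex_mem_graphFace, hji]
  exact hK (mem_insert_self _ _) (mem_insert_of_mem hmem) (fun h => ha (h ▸ hmem)) rfl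

theorem filter_lt_erase_graphFace (g : Fin k → Fin m) (i : Fin k) (x : Fin m) :
    ((graphFace g).erase (toLex (i, g i))).filter (· < toLex (i, x)) =
      (graphFace g).filter (· < toLex (i, g i)) := by
  ext c
  obtain ⟨⟨j, y⟩, rfl⟩ := toLex.surjective c
  rcases eq_or_ne j i with rfl | hji
  · simp only [mem_filter, mem_erase, toLex_mem_graphFace, Prod.Lex.toLex_lt_toLex]
    grind
  · simp [toLex_mem_graphFace, Prod.Lex.toLex_lt_toLex, hji]

section Laplacian

variable {F}

theorem upC_cliqueComplex_eq_zero : upC F (KmkGraph m k).cliqueComplex k = 0 := by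
  ext t : 2
  rw [LinearMap.comp_apply, Finsupp.lsingle_apply, upC_single]
  refine sum_eq_zero fun a ha => ?_
  refine (congrArg _ (faceChain_of_not fun hK => ?_)).trans (smul_zero _)
  have hcard := hK.card_le_of_coloring (coloring m k)
  rw [card_insert_of_notMem (mem_compl.mp ha), t.2.1, Fintype.card_fin] at hcard
  exact Nat.not_succ_le_self k hcard

theorem downC_single_topFace {d : ℕ} (g : Fin (d + 1) → Fin m) :
    downC F (KmkGraph m (d + 1)).cliqueComplex d (Finsupp.single (topFaceEquiv m (d + 1) g) 1) =
      ∑ i, (-1 : F) ^ ((graphFace g).filter (· < toLex (i, g i))).card •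
        faceChain F (KmkGraph m (d + 1)).cliqueComplex d
          ((graphFace g).erase (toLex (i, g i))) := by
  rw [downC_single, topFaceEquiv_apply_coe, graphFace, sum_image]
  exact fun i _ j _ h => congrArg (·.1) (toLex.injective h)

theorem upC_faceChain_erase_graphFace {d : ℕ} (g : Fin (d + 1) → Fin m) (i : Fin (d + 1)) :
    upC F (KmkGraph m (d + 1)).cliqueComplex d
        (faceChain F (KmkGraph m (d + 1)).cliqueComplex d ((graphFace g).erase (toLex (i, g i)))) =
      (-1 : F) ^ ((graphFace g).filter (· < toLex (i, g i))).card •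
        ∑ x, Finsupp.single (topFaceEquiv m (d + 1) (update g i x)) 1 := by
  set t := (graphFace g).erase (toLex (i, g i))
  have ht : t.card = d ∧ (KmkGraph m (d + 1)).cliqueComplex t := by
    refine ⟨?_, (isClique_graphFace g).subset (coe_subset.mpr (erase_subset _ _))⟩
    rw [card_erase_of_mem (toLex_mem_graphFace.mpr rfl), card_graphFace, Nat.add_sub_cancel]
  have hsub : univ.image (fun x => toLex (i, x)) ⊆ tᶜ := by
    simp [subset_iff, t, toLex_mem_graphFace, eq_comm, em]
  rw [faceChain_of_mem ⟨t, ht⟩, upC_single, ← sum_subset hsub, sum_image, Finset.smul_sum]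
  · refine sum_congr rfl fun x _ => ?_
    rw [filter_lt_erase_graphFace, insert_erase_graphFace]
    exact congrArg _ (faceChain_of_mem (topFaceEquiv m (d + 1) (update g i x)))
  · exact fun x _ y _ h => congrArg (·.2) (toLex.injective h)
  · intro a ha hai
    refine (congrArg _ (faceChain_of_not fun hK => hai ?_)).trans (smul_zero _)
    obtain ⟨⟨j, y⟩, rfl⟩ := toLex.surjective a
    obtain rfl : j = i := fst_eq_of_isClique_insert_erase_graphFace (mem_compl.mp ha) hK
    exact mem_image_of_mem _ (mem_univ y)

theorem upC_downC_single_topFace {d : ℕ} (g : Fin (d + 1) → Fin m) :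
    upC F (KmkGraph m (d + 1)).cliqueComplex d
        (downC F (KmkGraph m (d + 1)).cliqueComplex d
          (Finsupp.single (topFaceEquiv m (d + 1) g) 1)) =
      ∑ i, ∑ x, Finsupp.single (topFaceEquiv m (d + 1) (update g i x)) 1 := by
  rw [downC_single_topFace, map_sum]
  refine sum_congr rfl fun i _ => ?_
  rw [map_smul, upC_faceChain_erase_graphFace, smul_smul, ← pow_add, Even.neg_one_pow ⟨_, rfl⟩,
    one_smul]

variable (F) in
noncomputable def fiberSum (i : Fin k) : Module.End F (Cc F (KmkGraph m k).cliqueComplex k) :=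
  ∑ x, Finsupp.lmapDomain F F fun s => topFaceEquiv m k (update ((topFaceEquiv m k).symm s) i x)

theorem fiberSum_single (i : Fin k) (g : Fin k → Fin m) (b : F) :
    fiberSum F i (Finsupp.single (topFaceEquiv m k g) b) =
      ∑ x, Finsupp.single (topFaceEquiv m k (update g i x)) b := by
  simp [fiberSum, LinearMap.sum_apply, Finsupp.mapDomain_single]

theorem lapCard_eq_sum_fiberSum (d : ℕ) :
    lapCard F (KmkGraph m (d + 1)).cliqueComplex (d + 1) = ∑ i, fiberSum F i := by
  ext s : 2
  obtain ⟨g, rfl⟩ := (topFaceEquiv m (d + 1)).surjective s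
  simp only [LinearMap.comp_apply, Finsupp.lsingle_apply, lapCard, upC_cliqueComplex_eq_zero,
    LinearMap.comp_zero, add_zero, upC_downC_single_topFace, LinearMap.sum_apply, fiberSum_single]

theorem fiberSum_commute (i j : Fin k) : Commute (fiberSum F (m := m) i) (fiberSum F j) := by
  rcases eq_or_ne i j with rfl | hij
  · exact Commute.refl _
  show fiberSum F i * fiberSum F j = fiberSum F j * fiberSum F i
  ext s : 2
  obtain ⟨g, rfl⟩ := (topFaceEquiv m k).surjective s
  simp only [LinearMap.comp_apply, Finsupp.lsingle_apply, Module.End.mul_apply, fiberSum_single,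
    map_sum]
  rw [Finset.sum_comm]
  simp_rw [update_comm hij]

theorem fiberSum_mul_self (i : Fin k) :
    fiberSum F i * fiberSum F i = (m : F) • fiberSum F (m := m) i := by
  ext s : 2
  obtain ⟨g, rfl⟩ := (topFaceEquiv m k).surjective s
  simp only [LinearMap.comp_apply, Finsupp.lsingle_apply, Module.End.mul_apply, fiberSum_single,
    map_sum, update_idem, LinearMap.smul_apply, sum_const, card_univ, Fintype.card_fin,
    Nat.cast_smul_eq_nsmul]

end Laplacian

section Spectrum

variable {F}

theorem fiberSum_sum_single (i : Fin k) (c : (Fin k → Fin m) → F) :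
    fiberSum F i (∑ g, Finsupp.single (topFaceEquiv m k g) (c g)) =
      ∑ g, Finsupp.single (topFaceEquiv m k g) (∑ x, c (update g i x)) := by
  simp_rw [map_sum, fiberSum_single, Finsupp.single_finsetSum]
  exact Fintype.sum_sum_update_swap i fun g' g => Finsupp.single (topFaceEquiv m k g') (c g)

theorem exists_eq_mul_of_hasEigenvalue_lapCard {d : ℕ} {μ : F}
    (hμ : Module.End.HasEigenvalue (lapCard F (KmkGraph m (d + 1)).cliqueComplex (d + 1)) μ) :
    ∃ j ≤ d + 1, μ = j * m := by
  rw [lapCard_eq_sum_fiberSum] at hμ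
  simpa using hμ.exists_eq_natCast_mul_of_sum fiberSum_commute fiberSum_mul_self

/-- For `w` of zero sum, every `fiberSum i` with `i ≠ 0` kills this chain and `fiberSum 0`
multiplies it by `m`. -/
noncomputable def productChain {d : ℕ} (w : Fin m → F) :
    Cc F (KmkGraph m (d + 1)).cliqueComplex (d + 1) :=
  ∑ g, Finsupp.single (topFaceEquiv m (d + 1) g) (∏ j ∈ univ.erase 0, w (g j))

theorem lapCard_productChain {d : ℕ} {w : Fin m → F} (hw : ∑ x, w x = 0) :
    lapCard F (KmkGraph m (d + 1)).cliqueComplex (d + 1) (productChain w) =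
      (m : F) • productChain w := by
  rw [lapCard_eq_sum_fiberSum, LinearMap.sum_apply, productChain]
  simp_rw [fiberSum_sum_single, sum_prod_update_eq_ite hw]
  rw [Finset.sum_comm, Finset.smul_sum]
  refine sum_congr rfl fun g _ => ?_
  rw [← Finsupp.single_finsetSum, Finsupp.smul_single, Fintype.sum_eq_single 0,
    if_neg (notMem_erase 0 univ), Fintype.card_fin, nsmul_eq_mul, smul_eq_mul]
  exact fun i hi => if_pos (mem_erase.mpr ⟨hi, mem_univ i⟩)

theorem productChain_apply {d : ℕ} (w : Fin m → F) (g : Fin (d + 1) → Fin m) :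
    productChain w (topFaceEquiv m (d + 1) g) = ∏ j ∈ univ.erase 0, w (g j) := by
  simp [productChain, Finsupp.finsetSum_apply, Finsupp.single_apply]

theorem hasEigenvalue_lapCard {d : ℕ} (hm : 2 ≤ m) :
    Module.End.HasEigenvalue (lapCard F (KmkGraph m (d + 1)).cliqueComplex (d + 1)) (m : F) := by
  obtain ⟨a, b, hab⟩ := Fintype.exists_pair_of_one_lt_card (by rw [Fintype.card_fin]; exact hm)
  set w : Fin m → F := Pi.single a 1 - Pi.single b 1
  have hw : ∑ x, w x = 0 := by simp [w, Finset.sum_sub_distrib]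
  refine Module.End.hasEigenvalue_of_hasEigenvector
    ⟨Module.End.mem_eigenspace_iff.mpr (lapCard_productChain hw), fun h0 => ?_⟩
  have := productChain_apply (d := d) w fun _ => a
  simp [h0, w, hab] at this

end Spectrum

end KmkGraph

/-- The combinatorial Laplacian `Δ_{k−1} = ∂_{k−1}†∂_{k−1} + ∂_k∂_k†` of the clique
complex of `K(m,k)` (acting on real chains of faces of cardinality `k`, i.e. simplices of
dimension `k−1`) has spectrum contained in `{0, m, 2m, …, km}`; in particular its smallest
nonzero eigenvalue (spectral gap) is `m`. -/
theorem laplacian_gap_Kmk (m k : ℕ) (hm : 2 ≤ m) (hk : 1 ≤ k) :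
    (∀ μ : ℝ,
        Module.End.HasEigenvalue
          (lapCard ℝ (fun s : Finset (Lex (Fin k × Fin m)) => (KmkGraph m k).IsClique ↑s) k)
          μ → ∃ j : ℕ, j ≤ k ∧ μ = j * m) ∧
      Module.End.HasEigenvalue
        (lapCard ℝ (fun s : Finset (Lex (Fin k × Fin m)) => (KmkGraph m k).IsClique ↑s) k)
        (m : ℝ) ∧
      ∀ μ : ℝ,
        Module.End.HasEigenvalue
          (lapCard ℝ (fun s : Finset (Lex (Fin k × Fin m)) => (KmkGraph m k).IsClique ↑s) k)
          μ → μ ≠ 0 → (m : ℝ) ≤ μ := by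
  obtain ⟨d, rfl⟩ : ∃ d, k = d + 1 := ⟨k - 1, by omega⟩
  refine ⟨fun μ hμ => KmkGraph.exists_eq_mul_of_hasEigenvalue_lapCard hμ,
    KmkGraph.hasEigenvalue_lapCard hm, fun μ hμ hμ0 => ?_⟩
  obtain ⟨j, -, rfl⟩ := KmkGraph.exists_eq_mul_of_hasEigenvalue_lapCard hμ
  have hj : (1 : ℝ) ≤ j := by
    rw [Nat.one_le_cast, Nat.one_le_iff_ne_zero]
    rintro rfl
    simp at hμ0
  calc (m : ℝ) = 1 * m := (one_mul _).symm
    _ ≤ j * m := by gcongr
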